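/- The well-scoped λ-term container carries an ICMS: with shapes S : ℕ → Set the inductive family generated by var : S n, app : S n → S n → S n, lam : S (n+1) → S n, and positions P n var m := (n = m), P n (app M N) m := P n M m ⊕ P n N m, P n (lam M) m := P (n+1) M m, the operations e := var; var • σ := σ n refl; (app M N) • σ := app (M • (inl ; σ)) (N • (inr ; σ)); (lam M) • σ := lam (M • σ); together with Pe≡ p := p and ↑, ↖, ↗ defined by structural recursion on the shape (↑ over var is n; over app and lam it recurses; ↖ over var is refl, over app it wraps with inl/inr; ↗ over var p is p) satisfy all ICMS unit and associativity equations. -/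

import Mathlib

/-- An `I`-indexed container `S ◁ P`. -/
structure ICont (I : Type) where
  S : I → Type
  P : (i : I) → S i → I → Type

variable {I : Type}

/-- The extent `⟦S ◁ P⟧ X i := Σ s : S i, ∀ j, P i s j → X j`. -/
def IExt (C : ICont I) (X : I → Type) (i : I) : Type :=
  Σ s : C.S i, ∀ j, C.P i s j → X j

/-- Functorial action of the extent on maps of families. -/
def iExtMap (C : ICont I) {X Y : I → Type} (h : ∀ i, X i → Y i) (i : I) :
    IExt C X i → IExt C Y i :=
  fun x => ⟨x.1, fun j p => h j (x.2 j p)⟩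

/-- A morphism of indexed containers, in its `(σ, π)` form. -/
structure ICHom (C D : ICont I) where
  σ : ∀ i, C.S i → D.S i
  π : ∀ (i : I) (s : C.S i) (j : I), D.P i (σ i s) j → C.P i s j

/-- The natural transformation `⟦f⟧` induced by a container morphism. -/
def ICHom.extNat {C D : ICont I} (f : ICHom C D) (X : I → Type) (i : I) :
    IExt C X i → IExt D X i :=
  fun x => ⟨f.σ i x.1, fun j p' => x.2 j (f.π i x.1 j p')⟩

/-- The identity container morphism. -/
def ICHom.id (C : ICont I) : ICHom C C :=
  ⟨fun _ s => s, fun _ _ _ p => p⟩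

/-- Composition of container morphisms (diagrammatic order). -/
def ICHom.comp {C D E : ICont I} (f : ICHom C D) (g : ICHom D E) : ICHom C E :=
  ⟨fun i s => g.σ i (f.σ i s), fun i s j p => f.π i s j (g.π i (f.σ i s) j p)⟩

/-- The identity container: shapes `Unit`, positions at `(i, ⋆, j)` given by `i = j`. -/
def idC (I : Type) : ICont I :=
  ⟨fun _ => Unit, fun i _ j => PLift (i = j)⟩

/-- The composite (tensorIC) container. -/
def tensorIC (C D : ICont I) : ICont I :=
  ⟨fun i => IExt C D.S i,
   fun i ss k => Σ j : I, Σ p : C.P i ss.1 j, D.P j (ss.2 j p) k⟩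

/-- The data of an indexed container monoid structure (ICMS). -/
structure ICMSData {I : Type} (C : ICont I) where
  e : ∀ i, C.S i
  mul : ∀ (i : I) (s : C.S i), (∀ j, C.P i s j → C.S j) → C.S i
  Pe : ∀ (i j : I), C.P i (e i) j → i = j
  up : ∀ (i : I) (s : C.S i) (s' : ∀ j, C.P i s j → C.S j) (j : I),
    C.P i (mul i s s') j → I
  ul : ∀ (i : I) (s : C.S i) (s' : ∀ j, C.P i s j → C.S j) (j : I)
    (p : C.P i (mul i s s') j), C.P i s (up i s s' j p)
  ur : ∀ (i : I) (s : C.S i) (s' : ∀ j, C.P i s j → C.S j) (j : I)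
    (p : C.P i (mul i s s') j),
    C.P (up i s s' j p) (s' (up i s s' j p) (ul i s s' j p)) j

namespace ICMSData

variable {I : Type} {C : ICont I} (D : ICMSData C)

/-- The constant-unit family `e^P`. -/
def eP {i : I} (s : C.S i) : ∀ j, C.P i s j → C.S j := fun j _ => D.e j

/-- The constant family `s̄` over unit positions (transported along `Pe`). -/
def sbar {i : I} (s : C.S i) : ∀ j, C.P i (D.e i) j → C.S j :=
  fun j p => D.Pe i j p ▸ s

/-- Pointwise multiplication `s' •^P s''`. -/
def mulP {i : I} (s : C.S i) (s' : ∀ j, C.P i s j → C.S j)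
    (s'' : ∀ (k : I) (q : C.P i s k) (l : I), C.P k (s' k q) l → C.S l) :
    ∀ k, C.P i s k → C.S k :=
  fun k q => D.mul k (s' k q) (s'' k q)

/-- The reassociated family `⟨s''⟩`. -/
def smoosh {i : I} (s : C.S i) (s' : ∀ j, C.P i s j → C.S j)
    (s'' : ∀ (k : I) (q : C.P i s k) (l : I), C.P k (s' k q) l → C.S l) :
    ∀ l, C.P i (D.mul i s s') l → C.S l :=
  fun l r => s'' (D.up i s s' l r) (D.ul i s s' l r) l (D.ur i s s' l r)

end ICMSData

/-- The equations of an indexed container monoid structure. Some of the equations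
are heterogeneous; they are stated using `HEq`, quantifying over a transported
position `p₂` heterogeneously equal to `p`. -/
structure ICMSLaws {I : Type} (C : ICont I) (D : ICMSData C) : Prop where
  e_unit_l : ∀ (i : I) (s : C.S i), D.mul i s (D.eP s) = s
  ul_unit_l : ∀ (i : I) (s : C.S i) (j : I) (p : C.P i (D.mul i s (D.eP s)) j),
    HEq (D.ul i s (D.eP s) j p) p
  e_unit_r : ∀ (i : I) (s : C.S i), D.mul i (D.e i) (D.sbar s) = s
  ur_unit_r : ∀ (i : I) (s : C.S i) (j : I)
    (p : C.P i (D.mul i (D.e i) (D.sbar s)) j),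
    HEq (D.ur i (D.e i) (D.sbar s) j p) p
  mul_assoc : ∀ (i : I) (s : C.S i) (s' : ∀ j, C.P i s j → C.S j)
    (s'' : ∀ (k : I) (q : C.P i s k) (l : I), C.P k (s' k q) l → C.S l),
    D.mul i (D.mul i s s') (D.smoosh s s' s'') = D.mul i s (D.mulP s s' s'')
  up_assoc : ∀ (i : I) (s : C.S i) (s' : ∀ j, C.P i s j → C.S j)
    (s'' : ∀ (k : I) (q : C.P i s k) (l : I), C.P k (s' k q) l → C.S l) (j : I)
    (p : C.P i (D.mul i (D.mul i s s') (D.smoosh s s' s'')) j)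
    (p₂ : C.P i (D.mul i s (D.mulP s s' s'')) j), HEq p p₂ →
    D.up i (D.mul i s s') (D.smoosh s s' s'') j p =
      D.up (D.up i s (D.mulP s s' s'') j p₂)
        (s' (D.up i s (D.mulP s s' s'') j p₂) (D.ul i s (D.mulP s s' s'') j p₂))
        (s'' (D.up i s (D.mulP s s' s'') j p₂) (D.ul i s (D.mulP s s' s'') j p₂)) j
        (D.ur i s (D.mulP s s' s'') j p₂)
  ulup_up_assoc : ∀ (i : I) (s : C.S i) (s' : ∀ j, C.P i s j → C.S j)
    (s'' : ∀ (k : I) (q : C.P i s k) (l : I), C.P k (s' k q) l → C.S l) (j : I)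
    (p : C.P i (D.mul i (D.mul i s s') (D.smoosh s s' s'')) j)
    (p₂ : C.P i (D.mul i s (D.mulP s s' s'')) j), HEq p p₂ →
    D.up i s s' (D.up i (D.mul i s s') (D.smoosh s s' s'') j p)
        (D.ul i (D.mul i s s') (D.smoosh s s' s'') j p) =
      D.up i s (D.mulP s s' s'') j p₂
  ulul_ul_assoc : ∀ (i : I) (s : C.S i) (s' : ∀ j, C.P i s j → C.S j)
    (s'' : ∀ (k : I) (q : C.P i s k) (l : I), C.P k (s' k q) l → C.S l) (j : I)
    (p : C.P i (D.mul i (D.mul i s s') (D.smoosh s s' s'')) j)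
    (p₂ : C.P i (D.mul i s (D.mulP s s' s'')) j), HEq p p₂ →
    HEq (D.ul i s s' (D.up i (D.mul i s s') (D.smoosh s s' s'') j p)
          (D.ul i (D.mul i s s') (D.smoosh s s' s'') j p))
        (D.ul i s (D.mulP s s' s'') j p₂)
  ulur_urul_assoc : ∀ (i : I) (s : C.S i) (s' : ∀ j, C.P i s j → C.S j)
    (s'' : ∀ (k : I) (q : C.P i s k) (l : I), C.P k (s' k q) l → C.S l) (j : I)
    (p : C.P i (D.mul i (D.mul i s s') (D.smoosh s s' s'')) j)
    (p₂ : C.P i (D.mul i s (D.mulP s s' s'')) j), HEq p p₂ →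
    HEq (D.ur i s s' (D.up i (D.mul i s s') (D.smoosh s s' s'') j p)
          (D.ul i (D.mul i s s') (D.smoosh s s' s'') j p))
        (D.ul (D.up i s (D.mulP s s' s'') j p₂)
          (s' (D.up i s (D.mulP s s' s'') j p₂) (D.ul i s (D.mulP s s' s'') j p₂))
          (s'' (D.up i s (D.mulP s s' s'') j p₂) (D.ul i s (D.mulP s s' s'') j p₂)) j
          (D.ur i s (D.mulP s s' s'') j p₂))
  ur_urur_assoc : ∀ (i : I) (s : C.S i) (s' : ∀ j, C.P i s j → C.S j)
    (s'' : ∀ (k : I) (q : C.P i s k) (l : I), C.P k (s' k q) l → C.S l) (j : I)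
    (p : C.P i (D.mul i (D.mul i s s') (D.smoosh s s' s'')) j)
    (p₂ : C.P i (D.mul i s (D.mulP s s' s'')) j), HEq p p₂ →
    HEq (D.ur i (D.mul i s s') (D.smoosh s s' s'') j p)
        (D.ur (D.up i s (D.mulP s s' s'') j p₂)
          (s' (D.up i s (D.mulP s s' s'') j p₂) (D.ul i s (D.mulP s s' s'') j p₂))
          (s'' (D.up i s (D.mulP s s' s'') j p₂) (D.ul i s (D.mulP s s' s'') j p₂)) j
          (D.ur i s (D.mulP s s' s'') j p₂))

/-- An indexed container monoid structure: data together with the laws. -/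
structure ICMS {I : Type} (C : ICont I) where
  data : ICMSData C
  laws : ICMSLaws C data

/-- Shapes of the well-scoped λ-term container: an inductive family over ℕ. -/
inductive Tm : ℕ → Type where
  | var : ∀ {n}, Tm n
  | app : ∀ {n}, Tm n → Tm n → Tm n
  | lam : ∀ {n}, Tm (n + 1) → Tm n

/-- Positions, defined by recursion on the shape. -/
def Pos : ∀ {n : ℕ}, Tm n → ℕ → Type
  | n, .var, m => PLift (n = m)
  | _, .app M N, m => Pos M m ⊕ Pos N m
  | _, .lam M, m => Pos M m

/-- Shape substitution (the multiplication on shapes). -/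
def subst : ∀ {n : ℕ} (M : Tm n), (∀ m, Pos M m → Tm m) → Tm n
  | n, .var, σ => σ n ⟨rfl⟩
  | _, .app M N, σ =>
      .app (subst M (fun m p => σ m (.inl p))) (subst N (fun m p => σ m (.inr p)))
  | _, .lam M, σ => .lam (subst M σ)

/-- The index `↑ p` of the outer position, by structural recursion on the shape. -/
def upT : ∀ {n : ℕ} (M : Tm n) (σ : ∀ m, Pos M m → Tm m) (j : ℕ),
    Pos (subst M σ) j → ℕ
  | n, .var, _, _, _ => n
  | _, .app M N, σ, j, p =>
      match p with
      | .inl p => upT M (fun m p => σ m (.inl p)) j p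
      | .inr p => upT N (fun m p => σ m (.inr p)) j p
  | _, .lam M, σ, j, p => upT M σ j p

/-- The outer position `↖ p`. -/
def ulT : ∀ {n : ℕ} (M : Tm n) (σ : ∀ m, Pos M m → Tm m) (j : ℕ)
    (p : Pos (subst M σ) j), Pos M (upT M σ j p)
  | _, .var, _, _, _ => ⟨rfl⟩
  | _, .app M N, σ, j, p =>
      match p with
      | .inl p => .inl (ulT M (fun m p => σ m (.inl p)) j p)
      | .inr p => .inr (ulT N (fun m p => σ m (.inr p)) j p)
  | _, .lam M, σ, j, p => ulT M σ j p

/-- The inner position `↗ p`. -/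
def urT : ∀ {n : ℕ} (M : Tm n) (σ : ∀ m, Pos M m → Tm m) (j : ℕ)
    (p : Pos (subst M σ) j), Pos (σ (upT M σ j p) (ulT M σ j p)) j
  | _, .var, _, _, p => p
  | _, .app M N, σ, j, p =>
      match p with
      | .inl p => urT M (fun m p => σ m (.inl p)) j p
      | .inr p => urT N (fun m p => σ m (.inr p)) j p
  | _, .lam M, σ, j, p => urT M σ j p

/-- The well-scoped λ-term container. -/
def lamCont : ICont ℕ := ⟨Tm, fun _ M m => Pos M m⟩

/-- The ICMS data on the well-scoped λ-term container. -/
def lamData : ICMSData lamCont where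
  e _ := .var
  mul _ M σ := subst M σ
  Pe _ _ p := p.down
  up _ M σ j p := upT M σ j p
  ul _ M σ j p := ulT M σ j p
  ur _ M σ j p := urT M σ j p

/-! A position of either bracketing of the associativity law, `(M • σ) • ⟨τ⟩` or
`M • (σ • τ)`, splits into a triple of positions `q` in `M`, `r` in `σ q` and `t` in `τ q r`
(an `AssocPos`). Heterogeneously equal positions of the two bracketings split into the same
triple, and the five position coherences are this single equation read off componentwise. -/

universe u v

theorem Sum.inl_heq_inl_iff {α α' : Type u} {β β' : Type v} (hα : α = α') (hβ : β = β')
    {a : α} {a' : α'} :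
    HEq (Sum.inl a : α ⊕ β) (Sum.inl a' : α' ⊕ β') ↔ HEq a a' := by
  subst hα hβ; simp

theorem Sum.inr_heq_inr_iff {α α' : Type u} {β β' : Type v} (hα : α = α') (hβ : β = β')
    {b : β} {b' : β'} :
    HEq (Sum.inr b : α ⊕ β) (Sum.inr b' : α' ⊕ β') ↔ HEq b b' := by
  subst hα hβ; simp

theorem Sum.inl_not_heq_inr {α α' : Type u} {β β' : Type v} (hα : α = α') (hβ : β = β')
    {a : α} {b' : β'} :
    ¬HEq (Sum.inl a : α ⊕ β) (Sum.inr b' : α' ⊕ β') := by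
  subst hα hβ; simp

theorem subst_var : ∀ {n : ℕ} (M : Tm n), subst M (fun _ _ => .var) = M
  | _, .var => rfl
  | _, .app M N => congrArg₂ Tm.app (subst_var M) (subst_var N)
  | _, .lam M => congrArg Tm.lam (subst_var M)

theorem upT_var : ∀ {n : ℕ} (M : Tm n) (j : ℕ) (p : Pos (subst M (fun _ _ => .var)) j),
    upT M (fun _ _ => .var) j p = j
  | _, .var, _, p => p.down
  | _, .app M N, j, p => by
      rcases p with p | p
      exacts [upT_var M j p, upT_var N j p]
  | _, .lam M, j, p => upT_var M j p

theorem ulT_var : ∀ {n : ℕ} (M : Tm n) (j : ℕ) (p : Pos (subst M (fun _ _ => .var)) j),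
    HEq (ulT M (fun _ _ => .var) j p) p
  | _, .var, _, p => by obtain ⟨rfl⟩ := p; rfl
  | n, .app M N, j, p => by
      have pos_eq {k} (L : Tm n) (hk : k = j) : Pos L k = Pos (subst L fun _ _ => .var) j := by
        rw [hk, subst_var]
      rcases p with p | p
      · exact (Sum.inl_heq_inl_iff (pos_eq M (upT_var M j p)) (pos_eq N (upT_var M j p))).2
          (ulT_var M j p)
      · exact (Sum.inr_heq_inr_iff (pos_eq M (upT_var N j p)) (pos_eq N (upT_var N j p))).2
          (ulT_var N j p)
  | _, .lam M, j, p => ulT_var M j p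

theorem subst_assoc : ∀ {n : ℕ} (M : Tm n) (σ : ∀ m, Pos M m → Tm m)
    (τ : ∀ k (q : Pos M k) l, Pos (σ k q) l → Tm l),
    subst (subst M σ) (lamData.smoosh M σ τ) = subst M (lamData.mulP M σ τ)
  | _, .var, _, _ => rfl
  | _, .app M N, σ, τ =>
      congrArg₂ Tm.app (subst_assoc M (fun m p => σ m (.inl p)) (fun k q => τ k (.inl q)))
        (subst_assoc N (fun m p => σ m (.inr p)) (fun k q => τ k (.inr q)))
  | _, .lam M, σ, τ => congrArg Tm.lam (subst_assoc M σ τ)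

def AssocPos {n : ℕ} (M : Tm n) (σ : ∀ m, Pos M m → Tm m)
    (τ : ∀ k (q : Pos M k) l, Pos (σ k q) l → Tm l) (j : ℕ) : Type :=
  Σ k, Σ q : Pos M k, Σ l, Σ r : Pos (σ k q) l, Pos (τ k q l r) j

def AssocPos.ofLeft {n : ℕ} (M : Tm n) (σ : ∀ m, Pos M m → Tm m)
    (τ : ∀ k (q : Pos M k) l, Pos (σ k q) l → Tm l) (j : ℕ)
    (p : Pos (subst (subst M σ) (lamData.smoosh M σ τ)) j) : AssocPos M σ τ j :=
  ⟨upT M σ _ (ulT _ _ j p), ulT M σ _ (ulT _ _ j p), upT _ _ j p, urT M σ _ (ulT _ _ j p),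
    urT _ _ j p⟩

def AssocPos.ofRight {n : ℕ} (M : Tm n) (σ : ∀ m, Pos M m → Tm m)
    (τ : ∀ k (q : Pos M k) l, Pos (σ k q) l → Tm l) (j : ℕ)
    (p : Pos (subst M (lamData.mulP M σ τ)) j) : AssocPos M σ τ j :=
  ⟨upT M _ j p, ulT M _ j p, upT _ _ j (urT M _ j p), ulT _ _ j (urT M _ j p),
    urT _ _ j (urT M _ j p)⟩

theorem AssocPos.ofLeft_eq_ofRight : ∀ {n : ℕ} (M : Tm n) (σ : ∀ m, Pos M m → Tm m)
    (τ : ∀ k (q : Pos M k) l, Pos (σ k q) l → Tm l) (j : ℕ)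
    (p : Pos (subst (subst M σ) (lamData.smoosh M σ τ)) j)
    (p' : Pos (subst M (lamData.mulP M σ τ)) j), HEq p p' →
    AssocPos.ofLeft M σ τ j p = AssocPos.ofRight M σ τ j p'
  | _, .var, _, _, _, p, p', h => by cases eq_of_heq h; rfl
  | _, .app M N, σ, τ, j, p, p', h => by
      have eM := congrArg (Pos · j)
        (subst_assoc M (fun m p => σ m (.inl p)) (fun k q => τ k (.inl q)))
      have eN := congrArg (Pos · j)
        (subst_assoc N (fun m p => σ m (.inr p)) (fun k q => τ k (.inr q)))
      rcases p with p | p <;> rcases p' with p' | p'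
      · exact congrArg (fun x => (⟨x.1, .inl x.2.1, x.2.2⟩ : AssocPos (.app M N) σ τ j))
          (ofLeft_eq_ofRight M _ _ j p p' ((Sum.inl_heq_inl_iff eM eN).1 h))
      · exact absurd h (Sum.inl_not_heq_inr eM eN)
      · exact absurd h.symm (Sum.inl_not_heq_inr eM.symm eN.symm)
      · exact congrArg (fun x => (⟨x.1, .inr x.2.1, x.2.2⟩ : AssocPos (.app M N) σ τ j))
          (ofLeft_eq_ofRight N _ _ j p p' ((Sum.inr_heq_inr_iff eM eN).1 h))
  | _, .lam M, σ, τ, j, p, p', h => ofLeft_eq_ofRight M σ τ j p p' h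

/-- the well-scoped λ-term container carries an ICMS. -/
theorem scoped_lambda_icms : ICMSLaws lamCont lamData where
  e_unit_l _ M := subst_var M
  ul_unit_l _ M j p := ulT_var M j p
  e_unit_r _ _ := rfl
  ur_unit_r _ _ _ _ := .rfl
  mul_assoc _ M σ τ := subst_assoc M σ τ
  up_assoc _ M σ τ j p p' h := congrArg (·.2.2.1) (AssocPos.ofLeft_eq_ofRight M σ τ j p p' h)
  ulup_up_assoc _ M σ τ j p p' h := congrArg (·.1) (AssocPos.ofLeft_eq_ofRight M σ τ j p p' h)
  ulul_ul_assoc _ M σ τ j p p' h :=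
    congr_arg_heq (·.2.1) (AssocPos.ofLeft_eq_ofRight M σ τ j p p' h)
  ulur_urul_assoc _ M σ τ j p p' h :=
    congr_arg_heq (·.2.2.2.1) (AssocPos.ofLeft_eq_ofRight M σ τ j p p' h)
  ur_urur_assoc _ M σ τ j p p' h :=
    congr_arg_heq (·.2.2.2.2) (AssocPos.ofLeft_eq_ofRight M σ τ j p p' h)
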